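/- Let X be a complex Banach space and L(X) the Banach algebra of bounded linear operators on X. Let M = [[A, B], [C, D]] ∈ M₂(L(X)) and suppose A and D have Hirano inverses A^H and D^H. If B D^H = 0, BC = 0 and D·D^π·C = 0, where D^π = I − D·D^H, then M has a Hirano inverse in M₂(L(X)). -/

import Mathlib

/-- `a` has a Hirano inverse: there exists `z` with `az = za`, `z = zaz`,
and `a^2 - az` nilpotent. -/
def HasHiranoInverse {R : Type*} [Ring R] (a : R) : Prop :=
  ∃ z : R, a * z = z * a ∧ z = z * a * z ∧ IsNilpotent (a ^ 2 - a * z)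

/-- `a` has a strongly Drazin inverse: there exists `z` with `az = za`, `z = zaz`,
and `a - az` nilpotent. -/
def HasStronglyDrazinInverse {R : Type*} [Ring R] (a : R) : Prop :=
  ∃ z : R, a * z = z * a ∧ z = z * a * z ∧ IsNilpotent (a - a * z)

/-!
An element `a` of a ring has a Hirano inverse iff `a - a ^ 3` is nilpotent: given the inverse
`z`, `a * z` is an idempotent congruent to `a ^ 2` modulo nilpotents; conversely, in the
commutative subring generated by `a`, the image of `a ^ 2` modulo the nilradical is idempotent
and lifts to an idempotent `e`, and `e` is divisible by `a`.

With `e = D * D^H`, the matrix splits as `S + N`, where `S = !![A, 0; C, D * e]` is lower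
triangular with diagonal entries having Hirano inverses, `N = !![0, B; 0, D * (1 - e)]` is
nilpotent, and the hypotheses give `N * S = 0`. For such a pair,
`(S + N) - (S + N) ^ 3 = (S - S ^ 3) + W * N` with `W = 1 - S ^ 2 - S * N - N ^ 2`; here
`W * N` is nilpotent since `N * W = N - N ^ 3` is, and `(W * N) * (S - S ^ 3) = 0`, which makes
the sum nilpotent.
-/

section Nilpotent

variable {R : Type*} [Ring R]

theorem isNilpotent_add_of_mul_eq_zero {t u : R} (h : u * t = 0) (ht : IsNilpotent t)
    (hu : IsNilpotent u) : IsNilpotent (t + u) := by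
  obtain ⟨p, hp⟩ := ht
  obtain ⟨q, hq⟩ := hu
  have hpow_mul : ∀ k : ℕ, (t + u) ^ k * t = t ^ (k + 1) := by
    intro k
    induction k with
    | zero => simp
    | succ k ih => rw [pow_succ, mul_assoc, add_mul, h, add_zero, ← mul_assoc, ih, ← pow_succ]
  have hmul_pow : ∀ k : ℕ, u * (t + u) ^ k = u ^ (k + 1) := by
    intro k
    induction k with
    | zero => simp
    | succ k ih => rw [pow_succ', ← mul_assoc, mul_add, h, zero_add, mul_assoc, ih, ← pow_succ']
  refine ⟨p + 1 + q, ?_⟩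
  calc (t + u) ^ (p + 1 + q)
      = (t + u) ^ p * t * (t + u) ^ q + (t + u) ^ p * (u * (t + u) ^ q) := by
        simp only [pow_add, pow_one, mul_add, add_mul, mul_assoc]
    _ = 0 := by rw [hpow_mul, pow_succ, hp, hmul_pow, pow_succ, hq]; simp

theorem IsNilpotent.mul_comm {a b : R} (h : IsNilpotent (a * b)) : IsNilpotent (b * a) := by
  obtain ⟨k, hk⟩ := h
  exact ⟨k + 1, by rw [pow_succ', mul_assoc, ← mul_pow_mul, hk, zero_mul, mul_zero]⟩

theorem isNilpotent_mul_one_sub_of_isNilpotent_sq_sub {a e : R} (he : IsIdempotentElem e)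
    (hae : Commute a e) (h : IsNilpotent (a ^ 2 - e)) : IsNilpotent (a * (1 - e)) := by
  have hsq : (a * (1 - e)) ^ 2 = (a ^ 2 - e) * (1 - e) := by
    rw [((Commute.one_right a).sub_right hae).mul_pow, he.one_sub.pow_succ_eq, sub_mul,
      mul_one_sub e, he.eq, sub_self, sub_zero]
  have hcomm : Commute (a ^ 2 - e) (1 - e) :=
    (Commute.one_right _).sub_right ((hae.pow_left 2).sub_left (Commute.refl e))
  obtain ⟨k, hk⟩ := hcomm.isNilpotent_mul_right h
  exact ⟨2 * k, by rw [pow_mul, hsq, hk]⟩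

end Nilpotent

namespace Matrix

variable {R : Type*} [Ring R]

theorem zero_fin_two : (0 : Matrix (Fin 2) (Fin 2) R) = !![0, 0; 0, 0] := by
  ext i j
  fin_cases i <;> fin_cases j <;> rfl

theorem exists_lowerTriangular_fin_two_pow (a c d : R) (k : ℕ) :
    ∃ c', !![a, 0; c, d] ^ k = !![a ^ k, 0; c', d ^ k] := by
  induction k with
  | zero => exact ⟨0, by rw [pow_zero, pow_zero, pow_zero, one_fin_two]⟩
  | succ k ih =>
    obtain ⟨c', hc'⟩ := ih
    exact ⟨c' * a + d ^ k * c, by rw [pow_succ, hc', mul_fin_two]; simp [pow_succ]⟩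

theorem exists_upperTriangular_fin_two_pow (a b d : R) (k : ℕ) :
    ∃ b', !![a, b; 0, d] ^ k = !![a ^ k, b'; 0, d ^ k] := by
  induction k with
  | zero => exact ⟨0, by rw [pow_zero, pow_zero, pow_zero, one_fin_two]⟩
  | succ k ih =>
    obtain ⟨b', hb'⟩ := ih
    exact ⟨a ^ k * b + b' * d, by rw [pow_succ, hb', mul_fin_two]; simp [pow_succ]⟩

theorem isNilpotent_lowerTriangular_fin_two {a d : R} (c : R) (ha : IsNilpotent a)
    (hd : IsNilpotent d) : IsNilpotent !![a, 0; c, d] := by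
  obtain ⟨p, hp⟩ := ha
  obtain ⟨q, hq⟩ := hd
  obtain ⟨c', hc'⟩ := exists_lowerTriangular_fin_two_pow a c d (p + q)
  refine ⟨2 * (p + q), ?_⟩
  rw [pow_mul', hc', pow_add, hp, zero_mul, pow_add, hq, mul_zero, sq, mul_fin_two]
  simp [zero_fin_two]

theorem isNilpotent_upperTriangular_fin_two {a d : R} (b : R) (ha : IsNilpotent a)
    (hd : IsNilpotent d) : IsNilpotent !![a, b; 0, d] := by
  obtain ⟨p, hp⟩ := ha
  obtain ⟨q, hq⟩ := hd
  obtain ⟨b', hb'⟩ := exists_upperTriangular_fin_two_pow a b d (p + q)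
  refine ⟨2 * (p + q), ?_⟩
  rw [pow_mul', hb', pow_add, hp, zero_mul, pow_add, hq, mul_zero, sq, mul_fin_two]
  simp [zero_fin_two]

end Matrix

section Ring

variable {R : Type*} [Ring R]

theorem HasHiranoInverse.isNilpotent_sub_pow_three {a : R} (h : HasHiranoInverse a) :
    IsNilpotent (a - a ^ 3) := by
  obtain ⟨z, hc, hz, hn⟩ := h
  set e := a * z
  have he : IsIdempotentElem e := by
    rw [IsIdempotentElem, mul_assoc, ← mul_assoc z, ← hz]
  have hae : Commute a e := (Commute.refl a).mul_right hc
  have hae' : Commute a (1 - e) := (Commute.one_right a).sub_right hae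
  have haν : Commute a (a ^ 2 - e) := ((Commute.refl a).pow_right 2).sub_right hae
  have heν : Commute (1 - e) (a ^ 2 - e) :=
    (Commute.one_left _).sub_left ((hae.pow_left 2).symm.sub_right (Commute.refl e))
  have hsplit : a - a ^ 3 = a * (1 - e) - a * (a ^ 2 - e) := by noncomm_ring
  rw [hsplit]
  exact Commute.isNilpotent_sub
    (((Commute.refl a).mul_left hae'.symm).mul_right (haν.mul_left heν))
    (isNilpotent_mul_one_sub_of_isNilpotent_sq_sub he hae hn) (haν.isNilpotent_mul_left hn)

theorem HasHiranoInverse.map {S F : Type*} [Ring S] [FunLike F R S] [RingHomClass F R S] (f : F)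
    {a : R} (h : HasHiranoInverse a) : HasHiranoInverse (f a) := by
  obtain ⟨z, hc, hz, hn⟩ := h
  refine ⟨f z, by rw [← map_mul, hc, map_mul], by rw [← map_mul, ← map_mul, ← hz], ?_⟩
  simpa using hn.map f

end Ring

section CommRing

variable {R : Type*} [CommRing R]

theorem hasHiranoInverse_of_isNilpotent_sub_pow_three_comm {a : R}
    (h : IsNilpotent (a - a ^ 3)) : HasHiranoInverse a := by
  let f := Ideal.Quotient.mk (nilradical R)
  have hker : ∀ x ∈ RingHom.ker f, IsNilpotent x := by
    simp [f, Ideal.mk_ker, mem_nilradical]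
  have hidem : IsIdempotentElem (f (a ^ 2)) := by
    rw [IsIdempotentElem, ← map_mul, Ideal.Quotient.eq, mem_nilradical]
    have : a ^ 2 * a ^ 2 - a ^ 2 = -(a * (a - a ^ 3)) := by ring
    rw [this]
    exact (Commute.all a _).isNilpotent_mul_left h |>.neg
  obtain ⟨e, he, hfe⟩ :=
    exists_isIdempotentElem_eq_of_ker_isNilpotent f hker _ ⟨a ^ 2, rfl⟩ hidem
  have hν : IsNilpotent (e - a ^ 2) := mem_nilradical.mp (Ideal.Quotient.eq.mp hfe)
  obtain ⟨w, hw⟩ := hν.isUnit_one_sub.exists_left_inv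
  -- `e * a ^ 2 = e * (1 - (e - a ^ 2))`, and `w` inverts `1 - (e - a ^ 2)`
  have haz : a * (a * e * w) = e := by linear_combination w * he.eq + e * hw
  refine ⟨a * e * w, mul_comm _ _,
    by linear_combination (-(a * e * w)) * haz - a * w * he.eq, ?_⟩
  rw [haz, ← neg_sub]
  exact hν.neg

end CommRing

section Ring

variable {R : Type*} [Ring R]

theorem hasHiranoInverse_iff_isNilpotent_sub_pow_three {a : R} :
    HasHiranoInverse a ↔ IsNilpotent (a - a ^ 3) := by
  refine ⟨HasHiranoInverse.isNilpotent_sub_pow_three, fun h ↦ ?_⟩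
  let S := Subring.closure ({a} : Set R)
  have : IsMulCommutative S := Subring.isMulCommutative_closure (by simp)
  let a' : S := ⟨a, Subring.subset_closure rfl⟩
  have h' : IsNilpotent (a' - a' ^ 3) :=
    (IsNilpotent.map_iff (f := S.subtype) Subtype.val_injective).mp h
  open scoped IsMulCommutative in
  exact (hasHiranoInverse_of_isNilpotent_sub_pow_three_comm h').map S.subtype

theorem HasHiranoInverse.mul_of_isIdempotentElem {a e : R}
    (ha : HasHiranoInverse a) (he : IsIdempotentElem e) (hae : Commute a e) :
    HasHiranoInverse (a * e) := by
  rw [hasHiranoInverse_iff_isNilpotent_sub_pow_three] at ha ⊢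
  rw [hae.mul_pow, he.pow_succ_eq 2, ← sub_mul]
  exact (hae.sub_left (hae.pow_left 3)).isNilpotent_mul_right ha

theorem HasHiranoInverse.add_of_isNilpotent {s n : R}
    (hs : HasHiranoInverse s) (hn : IsNilpotent n) (hns : n * s = 0) :
    HasHiranoInverse (s + n) := by
  rw [hasHiranoInverse_iff_isNilpotent_sub_pow_three] at hs ⊢
  have hsplit : (s + n) - (s + n) ^ 3 = (s - s ^ 3) + (1 - s ^ 2 - s * n - n ^ 2) * n := by
    have : (s + n) ^ 3 = s ^ 3 + (s ^ 2 + s * n + n ^ 2) * n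
        + s * (n * s) + n * s * s + n * s * n + n * (n * s) := by noncomm_ring
    rw [this, hns]
    noncomm_ring
  have hnw : n * (1 - s ^ 2 - s * n - n ^ 2) = n * (1 - n ^ 2) := by
    have : n * (1 - s ^ 2 - s * n - n ^ 2) = n * (1 - n ^ 2) - n * s * s - n * s * n := by
      noncomm_ring
    rw [this, hns, zero_mul, zero_mul, sub_zero, sub_zero]
  rw [hsplit]
  refine isNilpotent_add_of_mul_eq_zero ?_ hs (IsNilpotent.mul_comm ?_)
  · have hns3 : n * (s - s ^ 3) = 0 := by
      rw [mul_sub, pow_succ', ← mul_assoc, hns, zero_mul, sub_zero]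
    rw [mul_assoc, hns3, mul_zero]
  · rw [hnw]
    exact ((Commute.one_right n).sub_right ((Commute.refl n).pow_right 2)).isNilpotent_mul_right hn

theorem HasHiranoInverse.lowerTriangular_fin_two {a d : R} (c : R)
    (ha : HasHiranoInverse a) (hd : HasHiranoInverse d) : HasHiranoInverse !![a, 0; c, d] := by
  rw [hasHiranoInverse_iff_isNilpotent_sub_pow_three] at ha hd ⊢
  obtain ⟨c', hc'⟩ := Matrix.exists_lowerTriangular_fin_two_pow a c d 3
  have hsub : !![a, 0; c, d] - !![a ^ 3, 0; c', d ^ 3]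
      = !![a - a ^ 3, 0; c - c', d - d ^ 3] := by
    ext i j; fin_cases i <;> fin_cases j <;> simp
  rw [hc', hsub]
  exact Matrix.isNilpotent_lowerTriangular_fin_two (c - c') ha hd

theorem HasHiranoInverse.fin_two {a b c d dH : R} (ha : HasHiranoInverse a)
    (hdc : d * dH = dH * d) (hdz : dH = dH * d * dH) (hdn : IsNilpotent (d ^ 2 - d * dH))
    (h1 : b * dH = 0) (h2 : b * c = 0) (h3 : d * (1 - d * dH) * c = 0) :
    HasHiranoInverse !![a, b; c, d] := by
  have hd : HasHiranoInverse d := ⟨dH, hdc, hdz, hdn⟩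
  set e := d * dH
  have he : IsIdempotentElem e := by rw [IsIdempotentElem, mul_assoc, ← mul_assoc dH, ← hdz]
  have hde : Commute d e := (Commute.refl d).mul_right hdc
  have hbde : b * (d * e) = 0 := by
    rw [hde.eq, hdc, ← mul_assoc, ← mul_assoc, h1, zero_mul, zero_mul]
  have hdπde : d * (1 - e) * (d * e) = 0 := by
    have hπe : (1 - e) * e = 0 := by rw [sub_mul, one_mul, he.eq, sub_self]
    calc d * (1 - e) * (d * e) = d * ((1 - e) * d) * e := by simp only [mul_assoc]
      _ = d * d * ((1 - e) * e) := by
        rw [((Commute.one_left d).sub_left hde.symm).eq]; simp only [mul_assoc]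
      _ = 0 := by rw [hπe, mul_zero]
  have hNS : !![0, b; 0, d * (1 - e)] * !![a, 0; c, d * e] = 0 := by
    simp [h2, h3, hbde, hdπde, Matrix.zero_fin_two]
  have hM : !![a, b; c, d] = !![a, 0; c, d * e] + !![0, b; 0, d * (1 - e)] := by
    simp [Matrix.of_add_of, ← mul_add]
  rw [hM]
  exact (lowerTriangular_fin_two c ha (hd.mul_of_isIdempotentElem he hde)).add_of_isNilpotent
    (Matrix.isNilpotent_upperTriangular_fin_two b IsNilpotent.zero
      (isNilpotent_mul_one_sub_of_isNilpotent_sq_sub he hde hdn)) hNS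

end Ring

variable {X : Type*} [NormedAddCommGroup X] [NormedSpace ℂ X] [CompleteSpace X]

theorem hirano_matrix_cor35 (A B C D AH DH : X →L[ℂ] X)
    (hAH : A * AH = AH * A ∧ AH = AH * A * AH ∧ IsNilpotent (A ^ 2 - A * AH))
    (hDH : D * DH = DH * D ∧ DH = DH * D * DH ∧ IsNilpotent (D ^ 2 - D * DH))
    (h1 : B * DH = 0)
    (h2 : B * C = 0)
    (h3 : D * (1 - D * DH) * C = 0) :
    HasHiranoInverse (!![A, B; C, D] : Matrix (Fin 2) (Fin 2) (X →L[ℂ] X)) :=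
  HasHiranoInverse.fin_two ⟨AH, hAH⟩ hDH.1 hDH.2.1 hDH.2.2 h1 h2 h3
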